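/- arXiv:2112.01413 — 4 statements merged into one kernel-verified Lean document; each statement's English description precedes it below -/
import Mathlib

section
/- For any n×n Hermitian positive definite complex matrix A, the trace of its inverse satisfies Tr(A⁻¹) ≥ Σ_{q=1}^{n} 1/A_{qq}, where A_{qq} denotes the (real, positive) q-th diagonal entry of A. -/
/-!
For `c = (A i i)⁻¹` the matrix `(A⁻¹ - c)ᴴ A (A⁻¹ - c) = A⁻¹ - 2c + c² A` is positive
semidefinite, and its `i`-th diagonal entry is `A⁻¹ i i - c`, which is therefore nonnegative.
Summing over `i` bounds the trace of `A⁻¹`.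
-/

open scoped ComplexOrder

namespace Matrix.PosDef

variable {n K : Type*} [Fintype n] [DecidableEq n]
  [Field K] [PartialOrder K] [StarRing K] [StarOrderedRing K]

theorem inv_diag_le_diag_inv {A : Matrix n n K} (hA : A.PosDef) (i : n) :
    (A i i)⁻¹ ≤ A⁻¹ i i := by
  set c := (A i i)⁻¹
  have hc : star c = c := by rw [star_inv₀, hA.isHermitian.apply i i]
  have hcA : c * A i i = 1 := inv_mul_cancel₀ hA.diag_pos.ne'
  have hdet : IsUnit A.det := (A.isUnit_iff_isUnit_det).1 hA.isUnit
  have hB : (A⁻¹ - c • 1)ᴴ * A * (A⁻¹ - c • 1) = A⁻¹ - (2 * c) • 1 + (c * c) • A := by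
    rw [conjTranspose_sub, conjTranspose_smul, hc, conjTranspose_one, hA.inv.isHermitian.eq]
    simp only [sub_mul, mul_sub, Matrix.smul_mul, Matrix.mul_smul, one_mul, mul_one,
      A.nonsing_inv_mul hdet, A.mul_nonsing_inv hdet, smul_smul]
    module
  have hdiag := (hA.posSemidef.conjTranspose_mul_mul_same (A⁻¹ - c • 1)).diag_nonneg (i := i)
  rw [hB] at hdiag
  simp only [add_apply, sub_apply, smul_apply, one_apply_eq, smul_eq_mul, mul_one,
    mul_assoc, hcA] at hdiag
  linear_combination hdiag

theorem sum_inv_diag_le_trace_inv {A : Matrix n n K} (hA : A.PosDef) :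
    ∑ i, (A i i)⁻¹ ≤ A⁻¹.trace :=
  Finset.sum_le_sum fun i _ => hA.inv_diag_le_diag_inv i

end Matrix.PosDef

/-- For any `n × n` Hermitian positive definite complex matrix `A`, the trace of its
inverse satisfies `Tr(A⁻¹) ≥ ∑ q, 1 / A q q`, where the diagonal entries of `A` are
real and positive (so they are identified with their real parts). -/
theorem trace_inv_ge_sum_inv_diag (n : ℕ) (A : Matrix (Fin n) (Fin n) ℂ)
    (hA : A.PosDef) :
    ∑ q : Fin n, 1 / (A q q).re ≤ (A⁻¹).trace.re := by
  have one_div_re (q : Fin n) : 1 / (A q q).re = ((A q q)⁻¹).re := by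
    have him : (A q q).im = 0 := (Complex.pos_iff.1 hA.diag_pos).2.symm
    simp [Complex.inv_re, Complex.normSq_apply, him]
  calc ∑ q, 1 / (A q q).re = (∑ q, (A q q)⁻¹).re := by simp only [one_div_re, Complex.re_sum]
    _ ≤ (A⁻¹).trace.re := Complex.re_le_re hA.sum_inv_diag_le_trace_inv
end

section
/- For an n×n Hermitian positive definite complex matrix A, equality Tr(A⁻¹) = Σ_{q=1}^{n} 1/A_{qq} holds if and only if A is a diagonal matrix. -/
/-!
For a positive definite `A` and a basis vector `e_q`, put `w = A_qq • A⁻¹ e_q - e_q`. Expanding,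
`wᴴ A w = A_qq (A_qq (A⁻¹)_qq - 1)`, so positivity of `A` gives `(A⁻¹)_qq ≥ 1 / A_qq`, with equality
iff `w = 0`, i.e. iff `A e_q = A_qq e_q`, i.e. iff column `q` of `A` vanishes off the diagonal.
Summing over `q`, `Tr A⁻¹ ≥ ∑ 1 / A_qq` with equality iff every column is diagonal.
-/

open scoped ComplexOrder

namespace Matrix

section CommRing

variable {ι R : Type*} [CommRing R] [Fintype ι] [DecidableEq ι] {M : Matrix ι ι R}

noncomputable def colDefect (M : Matrix ι ι R) (q : ι) : ι → R :=
  M q q • (M⁻¹ *ᵥ Pi.single q 1) - Pi.single q 1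

theorem colDefect_eq_zero_iff (hdet : IsUnit M.det) (q : ι) :
    colDefect M q = 0 ↔ ∀ p ≠ q, M p q = 0 := by
  have hsolve : M⁻¹ *ᵥ (M q q • Pi.single q 1) = Pi.single q 1 ↔
      M q q • Pi.single q 1 = M *ᵥ Pi.single q 1 :=
    ⟨fun h => by conv_rhs => rw [← h, mulVec_mulVec, mul_nonsing_inv _ hdet, one_mulVec],
      fun h => by rw [h, mulVec_mulVec, nonsing_inv_mul _ hdet, one_mulVec]⟩
  rw [colDefect, sub_eq_zero, ← mulVec_smul, hsolve, funext_iff]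
  refine forall_congr' fun p => ?_
  by_cases hpq : p = q
  · simp [hpq, mulVec_single]
  · simp [hpq, mulVec_single, eq_comm]

theorem IsHermitian.star_colDefect_dotProduct_mulVec [StarRing R] (hM : M.IsHermitian)
    (hdet : IsUnit M.det) (q : ι) :
    star (colDefect M q) ⬝ᵥ M *ᵥ colDefect M q = M q q * (M q q * M⁻¹ q q - 1) := by
  rw [colDefect]
  set e : ι → R := Pi.single q 1
  have hMinv : M *ᵥ (M⁻¹ *ᵥ e) = e := by rw [mulVec_mulVec, mul_nonsing_inv M hdet, one_mulVec]
  have hstar_diag : star (M q q) = M q q := hM.apply q q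
  have hinv_e_e : star (M⁻¹ *ᵥ e) ⬝ᵥ e = M⁻¹ q q := by
    simp [e, dotProduct_single, mulVec_single, hM.inv.apply q q]
  have hinv_e_M_e : star (M⁻¹ *ᵥ e) ⬝ᵥ M *ᵥ e = 1 := by
    rw [dotProduct_mulVec, ← hM.eq, ← star_mulVec, hM.eq, hMinv]
    simp [e]
  have he_M_e : star e ⬝ᵥ M *ᵥ e = M q q := by simp [e, mulVec_single]
  have he_e : star e ⬝ᵥ e = 1 := by simp [e]
  simp only [star_sub, star_smul, hstar_diag, mulVec_sub, mulVec_smul, hMinv, sub_dotProduct,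
    dotProduct_sub, smul_dotProduct, dotProduct_smul, smul_eq_mul, hinv_e_e, hinv_e_M_e, he_M_e,
    he_e]
  ring

end CommRing

theorem PosDef.star_dotProduct_mulVec_eq_zero_iff {R n : Type*} [Ring R] [PartialOrder R]
    [StarRing R] [Fintype n] {M : Matrix n n R} (hM : M.PosDef) {x : n → R} :
    star x ⬝ᵥ M *ᵥ x = 0 ↔ x = 0 :=
  ⟨fun h => by_contra fun hx => (hM.dotProduct_mulVec_pos hx).ne' h, fun h => by simp [h]⟩

variable {𝕜 ι : Type*} [RCLike 𝕜] {A : Matrix ι ι 𝕜}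

theorem PosDef.re_diag_pos (hA : A.PosDef) (q : ι) : 0 < RCLike.re (A q q) :=
  (RCLike.pos_iff.mp hA.diag_pos).1

variable [Fintype ι] [DecidableEq ι]

theorem PosDef.star_colDefect_dotProduct_mulVec_eq_ofReal (hA : A.PosDef) (q : ι) :
    star (colDefect A q) ⬝ᵥ A *ᵥ colDefect A q =
      ((RCLike.re (A q q) * (RCLike.re (A q q) * RCLike.re (A⁻¹ q q) - 1) : ℝ) : 𝕜) := by
  have hdiag : (RCLike.re (A q q) : 𝕜) = A q q :=
    RCLike.conj_eq_iff_re.mp (hA.isHermitian.apply q q)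
  have hinv_diag : (RCLike.re (A⁻¹ q q) : 𝕜) = A⁻¹ q q :=
    RCLike.conj_eq_iff_re.mp (hA.isHermitian.inv.apply q q)
  rw [hA.isHermitian.star_colDefect_dotProduct_mulVec (A.isUnit_iff_isUnit_det.mp hA.isUnit)]
  simp only [RCLike.ofReal_mul, RCLike.ofReal_sub, RCLike.ofReal_one, hdiag, hinv_diag]

theorem PosDef.one_div_re_diag_le_re_inv_diag (hA : A.PosDef) (q : ι) :
    1 / RCLike.re (A q q) ≤ RCLike.re (A⁻¹ q q) := by
  have hnonneg := hA.posSemidef.dotProduct_mulVec_nonneg (colDefect A q)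
  rw [hA.star_colDefect_dotProduct_mulVec_eq_ofReal, RCLike.ofReal_nonneg] at hnonneg
  rw [div_le_iff₀' (hA.re_diag_pos q), ← sub_nonneg]
  exact nonneg_of_mul_nonneg_right hnonneg (hA.re_diag_pos q)

theorem PosDef.one_div_re_diag_eq_re_inv_diag_iff (hA : A.PosDef) (q : ι) :
    1 / RCLike.re (A q q) = RCLike.re (A⁻¹ q q) ↔ ∀ p ≠ q, A p q = 0 := by
  have ha := (hA.re_diag_pos q).ne'
  rw [← colDefect_eq_zero_iff (A.isUnit_iff_isUnit_det.mp hA.isUnit),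
    ← hA.star_dotProduct_mulVec_eq_zero_iff, hA.star_colDefect_dotProduct_mulVec_eq_ofReal,
    RCLike.ofReal_eq_zero, mul_eq_zero, or_iff_right ha, sub_eq_zero, eq_comm, eq_div_iff ha,
    mul_comm]

theorem PosDef.re_trace_inv_eq_sum_one_div_re_diag_iff (hA : A.PosDef) :
    RCLike.re A⁻¹.trace = ∑ q, 1 / RCLike.re (A q q) ↔ ∀ p q, p ≠ q → A p q = 0 := by
  rw [trace, map_sum, eq_comm]
  simp only [diag_apply]
  rw [Finset.sum_eq_sum_iff_of_le fun q _ => hA.one_div_re_diag_le_re_inv_diag q]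
  simp only [Finset.mem_univ, true_imp_iff, hA.one_div_re_diag_eq_re_inv_diag_iff]
  exact forall_comm

end Matrix

/-- For an `n × n` Hermitian positive definite complex matrix `A`, equality
`Tr(A⁻¹) = ∑ q, 1 / A q q` holds if and only if `A` is a diagonal matrix. -/
theorem trace_inv_eq_sum_inv_diag_iff_diagonal (n : ℕ) (A : Matrix (Fin n) (Fin n) ℂ)
    (hA : A.PosDef) :
    (A⁻¹).trace.re = ∑ q : Fin n, 1 / (A q q).re ↔
      ∀ p q : Fin n, p ≠ q → A p q = 0 :=
  hA.re_trace_inv_eq_sum_one_div_re_diag_iff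
end

section
/- Let N = 2M+2 and let D be the N×N DFT matrix with entries D_{mn} = exp(−2πi(m−1)(n−1)/N). Define V ∈ ℂ^{N×N} by taking column 1 of V equal to column 1 of D, column M+2 of V equal to column M+2 of D, and every other column n of V equal to (1/√2) times column n of D. Then VᴴV is a diagonal matrix and Tr[(VᴴV)⁻¹] = (2M+1)/(M+1). -/
/-!
Writing `ζ = exp(2πi/N)`, the entries of `Dᴴ D` are geometric sums `∑ⱼ (ζᵃ / ζᵇ)ʲ` of an `N`-th
root of unity, which vanish unless `a = b`; hence `Dᴴ D = N • 1`. Scaling the columns of `D` by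
real weights `w` turns this into `Vᴴ V = diagonal (N w²)`. With `w² = 1` on the two columns `0`
and `M + 1` and `w² = 1/2` on the other `2M`, the trace of the inverse is
`(2 + 2M · 2) / (2M + 2) = (2M + 1) / (M + 1)`.
-/

open Matrix Finset Complex

theorem geom_sum_eq_zero_of_pow_eq_one {K : Type*} [DivisionRing K] {x : K} {N : ℕ}
    (hx : x ^ N = 1) (h1 : x ≠ 1) : ∑ i ∈ range N, x ^ i = 0 := by
  rw [geom_sum_eq h1, hx, sub_self, zero_div]

theorem IsPrimitiveRoot.sum_pow_div_pow {K : Type*} [Field K] {ζ : K} {N : ℕ}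
    (hζ : IsPrimitiveRoot ζ N) (a b : Fin N) :
    ∑ j : Fin N, (ζ ^ (a : ℕ) / ζ ^ (b : ℕ)) ^ (j : ℕ) = if a = b then (N : K) else 0 := by
  have hζ0 : ζ ≠ 0 := hζ.ne_zero (Fin.pos a).ne'
  split_ifs with hab
  · simp [hab, div_self (pow_ne_zero _ hζ0)]
  · rw [Fin.sum_univ_eq_sum_range (fun j => (ζ ^ (a : ℕ) / ζ ^ (b : ℕ)) ^ j)]
    refine geom_sum_eq_zero_of_pow_eq_one ?_ ?_
    · rw [div_pow, ← pow_mul, ← pow_mul, pow_mul', pow_mul', hζ.pow_eq_one, one_pow, one_pow,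
        div_one]
    · exact fun h => hab <| Fin.ext <|
        hζ.pow_inj a.isLt b.isLt ((div_eq_one_iff_eq (pow_ne_zero _ hζ0)).mp h)

noncomputable def dftMatrix (N : ℕ) : Matrix (Fin N) (Fin N) ℂ :=
  of fun j k => exp (-2 * Real.pi * I * (j : ℕ) * (k : ℕ) / N)

theorem star_dftMatrix_mul_dftMatrix (N : ℕ) (j a b : Fin N) :
    star (dftMatrix N j a) * dftMatrix N j b =
      (exp (2 * Real.pi * I / N) ^ (a : ℕ) / exp (2 * Real.pi * I / N) ^ (b : ℕ)) ^ (j : ℕ) := by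
  simp only [dftMatrix, of_apply, RCLike.star_def, ← exp_conj, div_eq_mul_inv, ← exp_nat_mul,
    ← exp_neg, ← exp_add]
  congr 1
  simp only [map_mul, map_neg, map_inv₀, conj_I, conj_ofReal, map_natCast, map_ofNat]
  ring

theorem dftMatrix_conjTranspose_mul_self (N : ℕ) [NeZero N] :
    (dftMatrix N)ᴴ * dftMatrix N = (N : ℂ) • 1 := by
  ext a b
  simp only [mul_apply, conjTranspose_apply, star_dftMatrix_mul_dftMatrix,
    (isPrimitiveRoot_exp N (NeZero.ne N)).sum_pow_div_pow, Matrix.smul_apply, one_apply,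
    smul_eq_mul, mul_ite, mul_one, mul_zero]

theorem conjTranspose_mul_self_mul_diagonal_ofReal {m n : Type*} [Fintype m] [Fintype n]
    [DecidableEq n] (A : Matrix m n ℂ) {s : ℂ} (hA : Aᴴ * A = s • 1) (w : n → ℝ) :
    (A * diagonal fun k => (w k : ℂ))ᴴ * (A * diagonal fun k => (w k : ℂ)) =
      diagonal fun k => s * (w k : ℂ) ^ 2 := by
  rw [conjTranspose_mul, diagonal_conjTranspose, Matrix.mul_assoc, ← Matrix.mul_assoc Aᴴ, hA,
    smul_one_eq_diagonal, diagonal_mul_diagonal, diagonal_mul_diagonal]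
  congr 1
  funext k
  rw [Pi.star_apply, RCLike.star_def, conj_ofReal]
  ring

theorem inv_diagonal_of_ne_zero {n K : Type*} [Fintype n] [DecidableEq n] [Field K]
    {v : n → K} (hv : ∀ i, v i ≠ 0) : (diagonal v)⁻¹ = diagonal fun i => (v i)⁻¹ := by
  refine inv_eq_right_inv ?_
  rw [diagonal_mul_diagonal, ← diagonal_one]
  exact congrArg diagonal (funext fun i => mul_inv_cancel₀ (hv i))

theorem sum_ite_val_eq_zero_or_half {R : Type*} [AddCommMonoid R] (M : ℕ) (a b : R) :
    ∑ n : Fin (2 * M + 2), (if (n : ℕ) = 0 ∨ (n : ℕ) = M + 1 then a else b) =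
      2 • a + (2 * M) • b := by
  have hpair : ({n | (n : ℕ) = 0 ∨ (n : ℕ) = M + 1} : Finset (Fin (2 * M + 2))) =
      {0, ⟨M + 1, by omega⟩} := by
    ext n
    simp only [mem_filter, mem_univ, true_and, mem_insert, mem_singleton, Fin.ext_iff,
      Fin.val_zero]
  have hcard : #({n | (n : ℕ) = 0 ∨ (n : ℕ) = M + 1} : Finset (Fin (2 * M + 2))) = 2 := by
    rw [hpair, card_pair (by simp [Fin.ext_iff])]
  rw [sum_ite, sum_const, sum_const, filter_not, card_sdiff_of_subset (filter_subset _ _), hcard,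
    card_univ, Fintype.card_fin, Nat.add_sub_cancel]

noncomputable def energySplitWeight (M : ℕ) (n : Fin (2 * M + 2)) : ℝ :=
  if (n : ℕ) = 0 ∨ (n : ℕ) = M + 1 then 1 else 1 / √2

theorem energySplitWeight_pos (M : ℕ) (n : Fin (2 * M + 2)) : 0 < energySplitWeight M n := by
  unfold energySplitWeight
  split_ifs <;> positivity

theorem energySplitWeight_sq_inv (M : ℕ) (n : Fin (2 * M + 2)) :
    ((energySplitWeight M n : ℂ) ^ 2)⁻¹ = if (n : ℕ) = 0 ∨ (n : ℕ) = M + 1 then 1 else 2 := by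
  rw [energySplitWeight]
  split_ifs
  · simp
  · rw [← ofReal_pow, div_pow, one_pow, Real.sq_sqrt zero_le_two]
    norm_num

theorem es_ideal_dft_measurement_matrix_general (M : ℕ)
    (D V : Matrix (Fin (2 * M + 2)) (Fin (2 * M + 2)) ℂ)
    (hD : ∀ j k : Fin (2 * M + 2),
      D j k = Complex.exp (-2 * Real.pi * Complex.I * (j : ℕ) * (k : ℕ) / (2 * M + 2)))
    (hV : ∀ i n : Fin (2 * M + 2),
      V i n = if n.1 = 0 ∨ n.1 = M + 1 then D i n
              else ((1 / Real.sqrt 2 : ℝ) : ℂ) * D i n) :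
    (Vᴴ * V).IsDiag ∧
      ((Vᴴ * V)⁻¹).trace = ((2 * M + 1 : ℝ) / (M + 1) : ℂ) := by
  have hD_eq : D = dftMatrix (2 * M + 2) := by
    ext j k
    rw [hD, dftMatrix, of_apply]
    push_cast
    rfl
  have hV_eq : V = D * diagonal fun n => (energySplitWeight M n : ℂ) := by
    ext i n
    rw [hV, mul_diagonal, energySplitWeight]
    split_ifs
    · rw [ofReal_one, mul_one]
    · rw [mul_comm]
  have hgram : Vᴴ * V = diagonal fun n => (2 * M + 2 : ℂ) * (energySplitWeight M n : ℂ) ^ 2 := by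
    rw [hV_eq, hD_eq, conjTranspose_mul_self_mul_diagonal_ofReal _
      (dftMatrix_conjTranspose_mul_self _)]
    push_cast
    rfl
  refine ⟨hgram ▸ isDiag_diagonal _, ?_⟩
  have hN : (2 * M + 2 : ℂ) ≠ 0 := by norm_cast
  rw [hgram, inv_diagonal_of_ne_zero fun n => mul_ne_zero hN <| pow_ne_zero 2 <|
    ofReal_ne_zero.mpr (energySplitWeight_pos M n).ne', trace_diagonal]
  simp only [mul_inv, energySplitWeight_sq_inv, ← mul_sum, sum_ite_val_eq_zero_or_half]
  push_cast
  field_simp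
  ring

/-- Let `N = 2M+2` and let `D` be the `N × N` DFT matrix with 0-based entries
`D j k = exp(-2πi·jk/N)`.  Define `V` by taking columns `0` and `M+1` (0-based;
columns `1` and `M+2` in 1-based indexing) of `V` equal to the corresponding
columns of `D`, and every other column equal to `1/√2` times the corresponding
column of `D`.  Then `VᴴV` is diagonal and `Tr[(VᴴV)⁻¹] = (2M+1)/(M+1)`. -/
theorem es_ideal_dft_measurement_matrix (M : ℕ) (hM : 1 ≤ M)
    (D V : Matrix (Fin (2 * M + 2)) (Fin (2 * M + 2)) ℂ)
    (hD : ∀ j k : Fin (2 * M + 2),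
      D j k = Complex.exp (-2 * Real.pi * Complex.I * (j : ℕ) * (k : ℕ) / (2 * M + 2)))
    (hV : ∀ i n : Fin (2 * M + 2),
      V i n = if n.1 = 0 ∨ n.1 = M + 1 then D i n
              else ((1 / Real.sqrt 2 : ℝ) : ℂ) * D i n) :
    (Vᴴ * V).IsDiag ∧
      ((Vᴴ * V)⁻¹).trace = ((2 * M + 1 : ℝ) / (M + 1) : ℂ) :=
  es_ideal_dft_measurement_matrix_general M D V hD hV
end

section
/- Let N = 2M+2, let D be the N×N DFT matrix with entries D_{mn} = exp(−2πi(m−1)(n−1)/N), let s_t(i) = 1 for all i, and let s_r(i) = (−1)^{i−1}·i_ℂ (i.e., the alternating sequence j, −j, j, −j, …, where i_ℂ = √−1). Define the unit-modulus training coefficients a(m,i) = D_{i,m+1}/s_t(i) and b(m,i) = D_{i,m+M+2}/s_r(i) for 1 ≤ m ≤ M, 1 ≤ i ≤ N. Then a(m,i) = i_ℂ · b(m,i) for all m, i; consequently Re(a(m,i) · conj(b(m,i))) = 0, so the coupled phase-shift constraint cos(θ_{m,i} − φ_{m,i}) = 0 is satisfied. -/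
/-! Column `M + 2 + m` of the DFT matrix of size `2(M + 1)` is column `m + 1` shifted by half
the period, hence equals it times `(-1)^i` in row `i`. The pilot `(-1)^i · I` cancels this sign,
leaving `a = I · b`, and then `a · conj b = I · |b|²` is purely imaginary. -/

open Complex in
theorem exp_dft_add_half {K : ℂ} (hK : K ≠ 0) (j : ℕ) (k : ℂ) :
    exp (-2 * Real.pi * I * j * (k + K) / (2 * K))
      = (-1) ^ j * exp (-2 * Real.pi * I * j * k / (2 * K)) := by
  have hsplit : -2 * Real.pi * I * j * (k + K) / (2 * K)
      = j * -(Real.pi * I) + -2 * Real.pi * I * j * k / (2 * K) := by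
    field_simp
    ring
  rw [hsplit, exp_add, exp_nat_mul, exp_neg_pi_mul_I]

theorem re_I_mul_mul_conj_self (z : ℂ) : (Complex.I * z * (starRingEnd ℂ) z).re = 0 := by
  rw [mul_assoc, Complex.mul_conj, Complex.I_mul_re, Complex.ofReal_im, neg_zero]

/-- With the DFT matrix `D` of size `N = 2M+2`, pilot sequences `s_t i = 1` and
`s_r i = (-1)^i · I` (the alternating sequence `j, -j, j, -j, …`, 0-based rows),
define the unit-modulus training coefficients `a m i = D i (m+1) / s_t i` and
`b m i = D i (m+M+2) / s_r i` (0-based columns `m+1` and `M+2+m`).  Then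
`a m i = I · b m i` for all `m, i`; consequently `Re(a m i · conj (b m i)) = 0`,
i.e., the coupled phase-shift constraint `cos(θ_{m,i} - φ_{m,i}) = 0` holds. -/
theorem coupled_phase_constraint_satisfied (M : ℕ)
    (D : Matrix (Fin (2 * M + 2)) (Fin (2 * M + 2)) ℂ)
    (hD : ∀ j k : Fin (2 * M + 2),
      D j k = Complex.exp (-2 * Real.pi * Complex.I * (j : ℕ) * (k : ℕ) / (2 * M + 2)))
    (s_t s_r : Fin (2 * M + 2) → ℂ)
    (hst : ∀ i, s_t i = 1)
    (hsr : ∀ i, s_r i = (-1 : ℂ) ^ (i : ℕ) * Complex.I)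
    (a b : Fin M → Fin (2 * M + 2) → ℂ)
    (ha : ∀ m i, a m i = D i ⟨m.1 + 1, by have := m.isLt; omega⟩ / s_t i)
    (hb : ∀ m i, b m i = D i ⟨M + 2 + m.1, by have := m.isLt; omega⟩ / s_r i) :
    ∀ (m : Fin M) (i : Fin (2 * M + 2)),
      a m i = Complex.I * b m i ∧ (a m i * (starRingEnd ℂ) (b m i)).re = 0 := by
  intro m i
  have hshift : D i ⟨M + 2 + m.1, by have := m.isLt; omega⟩
      = (-1) ^ (i : ℕ) * D i ⟨m.1 + 1, by have := m.isLt; omega⟩ := by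
    have hK : (M + 1 : ℂ) ≠ 0 := by exact_mod_cast Nat.succ_ne_zero M
    rw [hD, hD]
    convert exp_dft_add_half hK i ((m.1 + 1 : ℕ) : ℂ) using 3 <;> push_cast <;> ring
  have hab : a m i = Complex.I * b m i := by
    rw [ha, hb, hst, hsr, hshift]
    field_simp
  exact ⟨hab, hab ▸ re_I_mul_mul_conj_self _⟩
end
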